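/- Let H be a complex Hilbert space, D ⊆ H a subspace, A : D → H with Krein–von Neumann extension A_N, B ≥ 0 bounded with A_N ≤ B, and A_max^B := B − (B−A)_N. Then a bounded operator à with 0 ≤ à ≤ B is an extension of A if and only if A_N ≤ à ≤ A_max^B. -/

import Mathlib

open scoped ComplexInnerProductSpace

/-- A bounded operator `T` on a complex Hilbert space is positive if its quadratic form
is real and nonnegative. (`S ≤ T` is expressed as `IsPosOp (T - S)`.) -/
def IsPosOp {H : Type*} [NormedAddCommGroup H] [InnerProductSpace ℂ H]
    (T : H →L[ℂ] H) : Prop :=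
  ∀ x : H, (⟪T x, x⟫).im = 0 ∧ 0 ≤ (⟪T x, x⟫).re

/-!
The forward direction is the minimality of `A_N` and of `(B - A)_N`, applied to `Ã` and to
`B - Ã`. Conversely, on `D` the operator `B - (B - A)_N - Ã` acts as `-(Ã - A_N)`, so the two
lower bounds force the quadratic form of the positive operator `S = Ã - A_N` to vanish on `D`.
The Cauchy–Schwarz inequality for the semidefinite form `(x, y) ↦ ⟪x, S y⟫` then gives
`‖S x‖⁴ ≤ re ⟪S x, S (S x)⟫ · re ⟪x, S x⟫ = 0`, i.e. `Ã = A_N = A` on `D`.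
-/

open scoped InnerProductSpace
open RCLike

namespace ContinuousLinearMap.IsPositive

variable {𝕜 E : Type*} [RCLike 𝕜] [NormedAddCommGroup E] [InnerProductSpace 𝕜 E]
  {T : E →L[𝕜] E}

abbrev preInnerProductSpaceCore (hT : T.IsPositive) : PreInnerProductSpace.Core 𝕜 E where
  inner x y := ⟪x, T y⟫_𝕜
  conj_inner_symm x y := by rw [inner_conj_symm, hT.inner_left_eq_inner_right]
  re_inner_nonneg := hT.re_inner_nonneg_right
  add_left _ _ _ := inner_add_left ..
  smul_left _ _ _ := inner_smul_left ..

theorem norm_inner_mul_norm_inner_le (hT : T.IsPositive) (x y : E) :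
    ‖⟪x, T y⟫_𝕜‖ * ‖⟪y, T x⟫_𝕜‖ ≤ re ⟪x, T x⟫_𝕜 * re ⟪y, T y⟫_𝕜 :=
  letI := hT.preInnerProductSpaceCore
  InnerProductSpace.Core.inner_mul_inner_self_le (𝕜 := 𝕜) x y

theorem apply_eq_zero_of_re_inner_eq_zero (hT : T.IsPositive) {x : E}
    (hx : re ⟪T x, x⟫_𝕜 = 0) : T x = 0 := by
  have h := hT.norm_inner_mul_norm_inner_le (T x) x
  rw [← hT.inner_left_eq_inner_right x (T x), inner_re_symm x (T x), hx, mul_zero] at h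
  exact inner_self_eq_zero.mp <| norm_eq_zero.mp <| mul_self_eq_zero.mp <|
    h.antisymm (mul_self_nonneg _)

end ContinuousLinearMap.IsPositive

theorem isPosOp_iff_isPositive {H : Type*} [NormedAddCommGroup H] [InnerProductSpace ℂ H]
    (T : H →L[ℂ] H) : IsPosOp T ↔ T.IsPositive := by
  rw [ContinuousLinearMap.isPositive_iff_complex]
  refine forall_congr' fun x => and_congr ?_ Iff.rfl
  simp [Complex.ext_iff, eq_comm]

theorem stmt15_general {H : Type*} [NormedAddCommGroup H] [InnerProductSpace ℂ H]
    (D : Submodule ℂ H) (A : D →ₗ[ℂ] H) (AN B BN' : H →L[ℂ] H)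
    (hANext : ∀ x : D, AN x = A x)
    (hANmin : ∀ T : H →L[ℂ] H, IsPosOp T → (∀ x : D, T x = A x) → IsPosOp (T - AN))
    (hBN'ext : ∀ x : D, BN' x = B x - A x)
    (hBN'min : ∀ T : H →L[ℂ] H, IsPosOp T → (∀ x : D, T x = B x - A x) →
      IsPosOp (T - BN')) :
    ∀ Atil : H →L[ℂ] H, IsPosOp Atil → IsPosOp (B - Atil) →
      ((∀ x : D, Atil x = A x) ↔
        (IsPosOp (Atil - AN) ∧ IsPosOp ((B - BN') - Atil))) := by
  intro Atil hAtil hBAtil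
  constructor
  · intro hext
    refine ⟨hANmin Atil hAtil hext, ?_⟩
    rw [sub_right_comm]
    exact hBN'min (B - Atil) hBAtil fun x => by simp [hext x]
  · rintro ⟨hlow, hup⟩ x
    set S := Atil - AN
    have hupD : ((B - BN') - Atil) x = -S x := by
      simp only [S, sub_apply, hBN'ext x, hANext x]
      abel
    have hre : re ⟪S x, x⟫ = 0 := by
      have hup_x := (hup x).2
      rw [hupD, inner_neg_left, Complex.neg_re, neg_nonneg] at hup_x
      exact hup_x.antisymm (hlow x).2
    have hSx : S x = 0 :=
      ((isPosOp_iff_isPositive S).mp hlow).apply_eq_zero_of_re_inner_eq_zero hre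
    exact (sub_eq_zero.mp hSx).trans (hANext x)

/-- A bounded operator `Ã` with `0 ≤ Ã ≤ B` extends `A` if and only if
`A_N ≤ Ã ≤ A_max^B`, where `A_max^B = B − (B−A)_N`. Here `AN` is the Krein–von Neumann
extension of `A` and `BN'` that of `B|_D − A`. -/
theorem stmt15 {H : Type*} [NormedAddCommGroup H] [InnerProductSpace ℂ H] [CompleteSpace H]
    (D : Submodule ℂ H) (A : D →ₗ[ℂ] H) (AN B BN' : H →L[ℂ] H)
    (hANpos : IsPosOp AN) (hANext : ∀ x : D, AN x = A x)
    (hANmin : ∀ T : H →L[ℂ] H, IsPosOp T → (∀ x : D, T x = A x) → IsPosOp (T - AN))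
    (hBpos : IsPosOp B) (hANB : IsPosOp (B - AN))
    (hBN'pos : IsPosOp BN') (hBN'ext : ∀ x : D, BN' x = B x - A x)
    (hBN'min : ∀ T : H →L[ℂ] H, IsPosOp T → (∀ x : D, T x = B x - A x) →
      IsPosOp (T - BN')) :
    ∀ Atil : H →L[ℂ] H, IsPosOp Atil → IsPosOp (B - Atil) →
      ((∀ x : D, Atil x = A x) ↔
        (IsPosOp (Atil - AN) ∧ IsPosOp ((B - BN') - Atil))) :=
  stmt15_general D A AN B BN' hANext hANmin hBN'ext hBN'min
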